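/- KL-regularized objective monotonicity: In the setting of soft policy iteration with J_f(π) = E_{s∼ρ₀, a∼π}[Q_π(s,a) − β·KL(π(·|s) ‖ π_d(·|s))], the update π_n(·|s) ∝ π_d(·|s)·exp(Q_{π_{n-1}}(s,·)/β) satisfies J_f(π_n) ≥ J_f(π_{n-1}) for all n ≥ 1. -/

import Mathlib

/-- Discrete KL divergence `∑_a p(a)·log(p(a)/q(a))`. -/
noncomputable def klDisc {A : Type*} [Fintype A] (p q : A → ℝ) : ℝ :=
  ∑ a, p a * Real.log (p a / q a)

/-- Distribution of the state at time `i+1`, starting from state `s` and action `a`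
and afterwards following policy `pol` in the MDP with transition kernel `P`. -/
def sdistFrom {S A : Type*} [Fintype S] [Fintype A]
    (P : S → A → S → ℝ) (pol : S → A → ℝ) (s : S) (a : A) : ℕ → S → ℝ
  | 0 => P s a
  | i + 1 => fun s'' => ∑ s', ∑ a', sdistFrom P pol s a i s' * pol s' a' * P s' a' s''

/-- KL-regularized (soft) Q-function:
`Q_π(s,a) = E[R(s₀,a₀) + ∑_{i≥1} γ^i (R(s_i,a_i) − β·KL(π(·|s_i)‖π_d(·|s_i)))]`. -/
noncomputable def softQ {S A : Type*} [Fintype S] [Fintype A]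
    (γ β : ℝ) (R : S → A → ℝ) (P : S → A → S → ℝ) (πd pol : S → A → ℝ)
    (s : S) (a : A) : ℝ :=
  R s a + ∑' i : ℕ, γ ^ (i + 1) *
    ∑ s', sdistFrom P pol s a i s' *
      ((∑ a', pol s' a' * R s' a') - β * klDisc (pol s') (πd s'))

/-- KL-regularized objective
`J_f(π) = E_{s∼ρ₀, a∼π}[Q_π(s,a) − β·KL(π(·|s)‖π_d(·|s))]`. -/
noncomputable def Jf {S A : Type*} [Fintype S] [Fintype A]
    (γ β : ℝ) (R : S → A → ℝ) (P : S → A → S → ℝ) (ρ0 : S → ℝ) (πd pol : S → A → ℝ) : ℝ :=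
  ∑ s, ρ0 s * ((∑ a, pol s a * softQ γ β R P πd pol s a) - β * klDisc (pol s) (πd s))

/-!
The soft Q-function satisfies the Bellman equation `Q_π(s,a) = R(s,a) + γ ∑_{s'} P(s,a,s') V_π(s')`,
where `V_π(s) = 𝔼_{a∼π(·|s)} Q_π(s,a) - β KL(π(·|s) ‖ π_d(·|s))` and `J_f(π) = 𝔼_{s∼ρ₀} V_π(s)`;
the geometric series defining `Q_π` is handled through powers of the row-stochastic matrix
`M_π(s,s') = ∑_a π(a|s) P(s,a,s')`. By the Gibbs variational principle the update `π'` maximises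
`p ↦ 𝔼_p Q_π(s,·) - β KL(p ‖ π_d(·|s))` at every state, so `D = V_{π'} - V_π` satisfies
`D ≥ γ M_{π'} D`. Evaluated at a minimiser of `D` this gives `(1 - γ) min D ≥ 0`, hence `D ≥ 0`.
-/

open Finset Matrix

section Gibbs

variable {A : Type*} [Fintype A]

lemma klDisc_nonneg {p q : A → ℝ} (hp : ∀ a, 0 ≤ p a) (hq : ∀ a, 0 < q a)
    (hsum : ∑ a, p a = ∑ a, q a) : 0 ≤ klDisc p q := by
  have hterm : ∀ a, p a * Real.log (p a / q a)
      = q a * InformationTheory.klFun (p a / q a) + p a - q a := fun a => by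
    rw [InformationTheory.klFun_apply]
    field_simp [(hq a).ne']
    ring
  have hklFun : 0 ≤ ∑ a, q a * InformationTheory.klFun (p a / q a) :=
    sum_nonneg fun a _ =>
      mul_nonneg (hq a).le (InformationTheory.klFun_nonneg (div_nonneg (hp a) (hq a).le))
  simp only [klDisc, hterm, sum_sub_distrib, sum_add_distrib, hsum]
  linarith

lemma klDisc_self (q : A → ℝ) : klDisc q q = 0 :=
  sum_eq_zero fun a _ => by rcases eq_or_ne (q a) 0 with h | h <;> simp [h]

noncomputable def klRegValue (β : ℝ) (pd Q p : A → ℝ) : ℝ :=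
  ∑ a, p a * Q a - β * klDisc p pd

lemma klRegValue_add (β : ℝ) (pd Q c p : A → ℝ) :
    klRegValue β pd (fun a => Q a + c a) p = klRegValue β pd Q p + ∑ a, p a * c a := by
  simp only [klRegValue, mul_add, sum_add_distrib]
  ring

noncomputable def gibbs (β : ℝ) (pd Q : A → ℝ) (a : A) : ℝ :=
  pd a * Real.exp (Q a / β) / ∑ a', pd a' * Real.exp (Q a' / β)

variable {β : ℝ} {pd Q : A → ℝ}

lemma gibbs_pos [Nonempty A] (hpd : ∀ a, 0 < pd a) (a : A) : 0 < gibbs β pd Q a :=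
  div_pos (mul_pos (hpd a) (Real.exp_pos _))
    (sum_pos (fun a _ => mul_pos (hpd a) (Real.exp_pos _)) univ_nonempty)

lemma sum_gibbs [Nonempty A] (hpd : ∀ a, 0 < pd a) : ∑ a, gibbs β pd Q a = 1 := by
  simp only [gibbs, ← sum_div]
  exact div_self (sum_pos (fun a _ => mul_pos (hpd a) (Real.exp_pos _)) univ_nonempty).ne'

lemma klRegValue_eq_log_sub_klDisc_gibbs [Nonempty A] (hβ : β ≠ 0) (hpd : ∀ a, 0 < pd a) {p : A → ℝ}
    (hp : ∑ a, p a = 1) :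
    klRegValue β pd Q p
      = β * Real.log (∑ a, pd a * Real.exp (Q a / β)) - β * klDisc p (gibbs β pd Q) := by
  have hZ := sum_pos (fun a _ => mul_pos (hpd a) (Real.exp_pos (Q a / β))) univ_nonempty
  have hterm : ∀ a, p a * Real.log (p a / pd a) = p a * Real.log (p a / gibbs β pd Q a)
      + p a * Q a / β - p a * Real.log (∑ a, pd a * Real.exp (Q a / β)) := fun a => by
    rcases eq_or_ne (p a) 0 with h | h
    · simp [h]
    have hnum := mul_pos (hpd a) (Real.exp_pos (Q a / β))
    rw [gibbs, Real.log_div h (hpd a).ne', Real.log_div h (div_pos hnum hZ).ne',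
      Real.log_div hnum.ne' hZ.ne', Real.log_mul (hpd a).ne' (Real.exp_pos _).ne', Real.log_exp]
    ring
  simp only [klRegValue, klDisc, hterm, sum_sub_distrib, sum_add_distrib, ← sum_mul, ← sum_div, hp]
  field_simp
  ring

lemma klRegValue_le_gibbs [Nonempty A] (hβ : 0 < β) (hpd : ∀ a, 0 < pd a) {p : A → ℝ}
    (hp : ∀ a, 0 ≤ p a) (hpsum : ∑ a, p a = 1) :
    klRegValue β pd Q p ≤ klRegValue β pd Q (gibbs β pd Q) := by
  rw [klRegValue_eq_log_sub_klDisc_gibbs hβ.ne' hpd hpsum,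
    klRegValue_eq_log_sub_klDisc_gibbs hβ.ne' hpd (sum_gibbs hpd), klDisc_self]
  have := klDisc_nonneg hp (gibbs_pos hpd (β := β) (Q := Q)) (by rw [hpsum, sum_gibbs hpd])
  nlinarith

end Gibbs

section MarkovChain

variable {S A : Type*} [Fintype S] [Fintype A]

def policyKernel (P : S → A → S → ℝ) (pol : S → A → ℝ) : Matrix S S ℝ :=
  Matrix.of fun s s' => ∑ a, pol s a * P s a s'

variable {P : S → A → S → ℝ} {pol : S → A → ℝ}

lemma policyKernel_mem_rowStochastic [DecidableEq S] (hP : ∀ s a s', 0 ≤ P s a s')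
    (hPsum : ∀ s a, ∑ s', P s a s' = 1) (hpol : ∀ s a, 0 ≤ pol s a)
    (hpolsum : ∀ s, ∑ a, pol s a = 1) : policyKernel P pol ∈ rowStochastic ℝ S := by
  refine mem_rowStochastic_iff_sum.mpr
    ⟨fun s s' => sum_nonneg fun a _ => mul_nonneg (hpol s a) (hP s a s'), fun s => ?_⟩
  simp only [policyKernel, of_apply]
  rw [sum_comm]
  simp only [← mul_sum, hPsum, mul_one, hpolsum]

lemma sum_mul_dotProduct_eq_policyKernel_mulVec (v : S → ℝ) (s : S) :
    ∑ a, pol s a * (P s a ⬝ᵥ v) = (policyKernel P pol *ᵥ v) s := by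
  simp only [policyKernel, mulVec, dotProduct, of_apply, mul_sum, sum_mul]
  rw [sum_comm]
  exact sum_congr rfl fun _ _ => sum_congr rfl fun _ _ => by ring

lemma sdistFrom_eq_vecMul_pow [DecidableEq S] (s : S) (a : A) (i : ℕ) :
    sdistFrom P pol s a i = P s a ᵥ* policyKernel P pol ^ i := by
  induction i with
  | zero => simp [sdistFrom]
  | succ i ih =>
    ext s''
    rw [pow_succ, ← vecMul_vecMul, ← ih]
    simp only [sdistFrom, vecMul, dotProduct, policyKernel, of_apply, mul_sum, mul_assoc]

end MarkovChain

section DiscountedSum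

variable {S : Type*} [Fintype S] [DecidableEq S] {M : Matrix S S ℝ} {γ : ℝ}

lemma abs_mulVec_le_sum_abs (hM : M ∈ rowStochastic ℝ S) (g : S → ℝ) (s : S) :
    |(M *ᵥ g) s| ≤ ∑ s', |g s'| :=
  calc |(M *ᵥ g) s| ≤ ∑ s', |M s s' * g s'| := abs_sum_le_sum_abs _ _
    _ ≤ ∑ s', |g s'| := sum_le_sum fun s' _ => by
        rw [abs_mul, abs_of_nonneg (nonneg_of_mem_rowStochastic hM)]
        exact mul_le_of_le_one_left (abs_nonneg _) (le_one_of_mem_rowStochastic hM)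

lemma summable_pow_mul_pow_mulVec (hM : M ∈ rowStochastic ℝ S) (hγ0 : 0 ≤ γ) (hγ1 : γ < 1)
    (g : S → ℝ) (s : S) : Summable fun i : ℕ => γ ^ i * (M ^ i *ᵥ g) s := by
  refine .of_norm_bounded
    ((summable_geometric_of_lt_one hγ0 hγ1).mul_right (∑ s', |g s'|)) fun i => ?_
  rw [Real.norm_eq_abs, abs_mul, abs_of_nonneg (pow_nonneg hγ0 i)]
  exact mul_le_mul_of_nonneg_left (abs_mulVec_le_sum_abs (pow_mem hM i) g s) (pow_nonneg hγ0 i)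

noncomputable def discountedSum (γ : ℝ) (M : Matrix S S ℝ) (g : S → ℝ) (s : S) : ℝ :=
  ∑' i : ℕ, γ ^ i * (M ^ i *ᵥ g) s

lemma hasSum_dotProduct_discountedSum (hM : M ∈ rowStochastic ℝ S) (hγ0 : 0 ≤ γ) (hγ1 : γ < 1)
    (g v : S → ℝ) :
    HasSum (fun i : ℕ => γ ^ i * (v ⬝ᵥ M ^ i *ᵥ g)) (v ⬝ᵥ discountedSum γ M g) := by
  refine (hasSum_sum fun s (_ : s ∈ univ) =>
    (summable_pow_mul_pow_mulVec hM hγ0 hγ1 g s).hasSum.mul_left (v s)).congr_fun fun i => ?_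
  simp only [dotProduct, mul_sum, mul_left_comm]

lemma discountedSum_eq_add_mulVec (hM : M ∈ rowStochastic ℝ S) (hγ0 : 0 ≤ γ) (hγ1 : γ < 1)
    (g : S → ℝ) : discountedSum γ M g = g + γ • M *ᵥ discountedSum γ M g := by
  funext s
  have htail : HasSum (fun i : ℕ => γ ^ (i + 1) * (M ^ (i + 1) *ᵥ g) s)
      (γ * (M *ᵥ discountedSum γ M g) s) := by
    refine ((hasSum_dotProduct_discountedSum hM hγ0 hγ1 g (M s)).mul_left γ).congr_fun fun i => ?_
    rw [pow_succ', pow_succ', ← mulVec_mulVec, mul_assoc]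
    rfl
  rw [discountedSum, (summable_pow_mul_pow_mulVec hM hγ0 hγ1 g s).tsum_eq_zero_add,
    htail.tsum_eq]
  simp

end DiscountedSum

section Bellman

variable {S A : Type*} [Fintype S] [Fintype A] {γ β : ℝ} {R : S → A → ℝ}
  {P : S → A → S → ℝ} {πd pol : S → A → ℝ}

noncomputable def softV (γ β : ℝ) (R : S → A → ℝ) (P : S → A → S → ℝ) (πd pol : S → A → ℝ)
    (s : S) : ℝ :=
  klRegValue β (πd s) (softQ γ β R P πd pol s) (pol s)

lemma Jf_eq_sum_softV (ρ0 : S → ℝ) :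
    Jf γ β R P ρ0 πd pol = ∑ s, ρ0 s * softV γ β R P πd pol s :=
  rfl

lemma softQ_eq_add_dotProduct_discountedSum [DecidableEq S] (hγ0 : 0 ≤ γ) (hγ1 : γ < 1)
    (hP : ∀ s a s', 0 ≤ P s a s') (hPsum : ∀ s a, ∑ s', P s a s' = 1)
    (hpol : ∀ s a, 0 ≤ pol s a) (hpolsum : ∀ s, ∑ a, pol s a = 1) (s : S) (a : A) :
    softQ γ β R P πd pol s a = R s a + γ * (P s a ⬝ᵥ
      discountedSum γ (policyKernel P pol) fun s' => klRegValue β (πd s') (R s') (pol s')) := by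
  have hM := policyKernel_mem_rowStochastic hP hPsum hpol hpolsum
  refine congrArg (R s a + ·) ?_
  rw [← ((hasSum_dotProduct_discountedSum hM hγ0 hγ1 _ (P s a)).mul_left γ).tsum_eq]
  refine tsum_congr fun i => ?_
  change γ ^ (i + 1) * (sdistFrom P pol s a i ⬝ᵥ fun s' => klRegValue β (πd s') (R s') (pol s')) = _
  rw [sdistFrom_eq_vecMul_pow, ← dotProduct_mulVec, pow_succ']
  ring

lemma softV_eq_discountedSum [DecidableEq S] (hγ0 : 0 ≤ γ) (hγ1 : γ < 1)
    (hP : ∀ s a s', 0 ≤ P s a s') (hPsum : ∀ s a, ∑ s', P s a s' = 1)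
    (hpol : ∀ s a, 0 ≤ pol s a) (hpolsum : ∀ s, ∑ a, pol s a = 1) :
    softV γ β R P πd pol
      = discountedSum γ (policyKernel P pol) fun s => klRegValue β (πd s) (R s) (pol s) := by
  rw [discountedSum_eq_add_mulVec (policyKernel_mem_rowStochastic hP hPsum hpol hpolsum) hγ0 hγ1]
  funext s
  rw [softV, funext (softQ_eq_add_dotProduct_discountedSum hγ0 hγ1 hP hPsum hpol hpolsum s),
    klRegValue_add]
  simp only [mul_left_comm _ γ, ← mul_sum, sum_mul_dotProduct_eq_policyKernel_mulVec]
  rfl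

lemma softQ_bellman (hγ0 : 0 ≤ γ) (hγ1 : γ < 1)
    (hP : ∀ s a s', 0 ≤ P s a s') (hPsum : ∀ s a, ∑ s', P s a s' = 1)
    (hpol : ∀ s a, 0 ≤ pol s a) (hpolsum : ∀ s, ∑ a, pol s a = 1) (s : S) (a : A) :
    softQ γ β R P πd pol s a = R s a + γ * (P s a ⬝ᵥ softV γ β R P πd pol) := by
  classical
  rw [softV_eq_discountedSum hγ0 hγ1 hP hPsum hpol hpolsum,
    softQ_eq_add_dotProduct_discountedSum hγ0 hγ1 hP hPsum hpol hpolsum]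

end Bellman

lemma nonneg_of_le_mul_mulVec {S : Type*} [Fintype S] [DecidableEq S] {M : Matrix S S ℝ}
    {γ : ℝ} (hM : M ∈ rowStochastic ℝ S) (hγ0 : 0 ≤ γ) (hγ1 : γ < 1) {D : S → ℝ}
    (hD : ∀ s, γ * (M *ᵥ D) s ≤ D s) : 0 ≤ D := by
  refine fun s => show (0 : ℝ) ≤ D s from ?_
  obtain ⟨s₀, -, hs₀⟩ := exists_min_image univ D ⟨s, mem_univ s⟩
  have hmin : D s₀ ≤ (M *ᵥ D) s₀ := by
    have := nonneg_mulVec_of_mem_rowStochastic hM (x := D - D s₀ • 1)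
      fun t => by simpa using hs₀ t (mem_univ t)
    rw [mulVec_sub, mulVec_smul, one_vecMul_of_mem_rowStochastic hM] at this
    simpa using this s₀
  have : 0 ≤ (1 - γ) * D s₀ := by nlinarith [hD s₀]
  exact (nonneg_of_mul_nonneg_right this (by linarith)).trans (hs₀ s (mem_univ s))

lemma softV_le_softV_gibbs {S A : Type*} [Fintype S] [Fintype A] [Nonempty A] {γ β : ℝ}
    (hγ0 : 0 ≤ γ) (hγ1 : γ < 1) (hβ : 0 < β) {R : S → A → ℝ} {P : S → A → S → ℝ}
    (hP : ∀ s a s', 0 ≤ P s a s') (hPsum : ∀ s a, ∑ s', P s a s' = 1)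
    {πd : S → A → ℝ} (hπd : ∀ s a, 0 < πd s a) {π : S → A → ℝ}
    (hπ : ∀ s a, 0 ≤ π s a) (hπsum : ∀ s, ∑ a, π s a = 1) :
    softV γ β R P πd π ≤ softV γ β R P πd fun s => gibbs β (πd s) (softQ γ β R P πd π s) := by
  classical
  set π' := fun s => gibbs β (πd s) (softQ γ β R P πd π s)
  have hπ' : ∀ s a, 0 ≤ π' s a := fun s a => (gibbs_pos (hπd s) a).le
  have hπ'sum : ∀ s, ∑ a, π' s a = 1 := fun s => sum_gibbs (hπd s)
  set D := softV γ β R P πd π' - softV γ β R P πd π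
  rw [← sub_nonneg]
  refine nonneg_of_le_mul_mulVec (policyKernel_mem_rowStochastic hP hPsum hπ' hπ'sum) hγ0 hγ1
    fun s => ?_
  have hQ : softQ γ β R P πd π' s = fun a => softQ γ β R P πd π s a + γ * (P s a ⬝ᵥ D) := by
    funext a
    rw [softQ_bellman hγ0 hγ1 hP hPsum hπ' hπ'sum, softQ_bellman hγ0 hγ1 hP hPsum hπ hπsum,
      dotProduct_sub]
    ring
  have hgreedy : softV γ β R P πd π s ≤ klRegValue β (πd s) (softQ γ β R P πd π s) (π' s) :=
    klRegValue_le_gibbs hβ (hπd s) (hπ s) (hπsum s)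
  have hV' : softV γ β R P πd π' s
      = klRegValue β (πd s) (softQ γ β R P πd π s) (π' s) + γ * (policyKernel P π' *ᵥ D) s := by
    rw [softV, hQ, klRegValue_add, ← sum_mul_dotProduct_eq_policyKernel_mulVec, mul_sum]
    simp only [mul_left_comm γ]
  simp only [D, Pi.sub_apply] at hV' ⊢
  linarith

theorem soft_policy_iteration_monotone_general {S A : Type*} [Fintype S] [Fintype A]
    (γ : ℝ) (hγ : γ ∈ Set.Ioo (0 : ℝ) 1) (β : ℝ) (hβ : 0 < β)
    (R : S → A → ℝ)
    (P : S → A → S → ℝ) (hP : ∀ s a s', 0 ≤ P s a s') (hPsum : ∀ s a, ∑ s', P s a s' = 1)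
    (ρ0 : S → ℝ) (hρ0 : ∀ s, 0 ≤ ρ0 s)
    (πd : S → A → ℝ) (hπd : ∀ s a, 0 < πd s a)
    (πseq : ℕ → S → A → ℝ)
    (h0 : ∀ s a, 0 ≤ πseq 0 s a) (h0sum : ∀ s, ∑ a, πseq 0 s a = 1)
    (hstep : ∀ n s a, πseq (n + 1) s a =
      πd s a * Real.exp (softQ γ β R P πd (πseq n) s a / β) /
        ∑ a', πd s a' * Real.exp (softQ γ β R P πd (πseq n) s a' / β)) :
    ∀ n : ℕ, 1 ≤ n → Jf γ β R P ρ0 πd (πseq (n - 1)) ≤ Jf γ β R P ρ0 πd (πseq n) := by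
  rcases isEmpty_or_nonempty S with _ | ⟨⟨s⟩⟩
  · simp [Jf]
  have : Nonempty A := by
    obtain ⟨a, -⟩ := nonempty_of_sum_ne_zero (s := univ) (f := πseq 0 s) (by simp [h0sum])
    exact ⟨a⟩
  have hgibbs : ∀ n, πseq (n + 1) = fun s => gibbs β (πd s) (softQ γ β R P πd (πseq n) s) :=
    fun n => funext₂ (hstep n)
  have hpolicy : ∀ n, (∀ s a, 0 ≤ πseq n s a) ∧ ∀ s, ∑ a, πseq n s a = 1
    | 0 => ⟨h0, h0sum⟩
    | n + 1 => hgibbs n ▸ ⟨fun s a => (gibbs_pos (hπd s) a).le, fun s => sum_gibbs (hπd s)⟩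
  rintro (_ | n) hn
  · omega
  rw [Nat.add_sub_cancel, Jf_eq_sum_softV, Jf_eq_sum_softV, hgibbs n]
  exact sum_le_sum fun s _ => mul_le_mul_of_nonneg_left
    (softV_le_softV_gibbs hγ.1.le hγ.2 hβ hP hPsum hπd (hpolicy n).1 (hpolicy n).2 s) (hρ0 s)

/-- Monotonicity of soft policy iteration: the Gibbs update
`π_n(·|s) ∝ π_d(·|s)·exp(Q_{π_{n-1}}(s,·)/β)` satisfies `J_f(π_n) ≥ J_f(π_{n-1})`
for all `n ≥ 1`. -/
theorem soft_policy_iteration_monotone {S A : Type*} [Fintype S] [Fintype A]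
    (γ : ℝ) (hγ : γ ∈ Set.Ioo (0 : ℝ) 1) (β : ℝ) (hβ : 0 < β)
    (R : S → A → ℝ)
    (P : S → A → S → ℝ) (hP : ∀ s a s', 0 ≤ P s a s') (hPsum : ∀ s a, ∑ s', P s a s' = 1)
    (ρ0 : S → ℝ) (hρ0 : ∀ s, 0 ≤ ρ0 s) (hρ0sum : ∑ s, ρ0 s = 1)
    (πd : S → A → ℝ) (hπd : ∀ s a, 0 < πd s a) (hπdsum : ∀ s, ∑ a, πd s a = 1)
    (πseq : ℕ → S → A → ℝ)
    (h0 : ∀ s a, 0 ≤ πseq 0 s a) (h0sum : ∀ s, ∑ a, πseq 0 s a = 1)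
    (hstep : ∀ n s a, πseq (n + 1) s a =
      πd s a * Real.exp (softQ γ β R P πd (πseq n) s a / β) /
        ∑ a', πd s a' * Real.exp (softQ γ β R P πd (πseq n) s a' / β)) :
    ∀ n : ℕ, 1 ≤ n → Jf γ β R P ρ0 πd (πseq (n - 1)) ≤ Jf γ β R P ρ0 πd (πseq n) :=
  soft_policy_iteration_monotone_general γ hγ β hβ R P hP hPsum ρ0 hρ0 πd hπd πseq h0 h0sum hstep
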